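/- Let n ≥ 1 and let t denote the variable X of the polynomial ring ℤ[t]. Let A_n and B_n be the n×n matrices over ℤ[t] with entries (A_n)_{ij} = 2 if i ≤ j and 1 if i > j, and (B_n)_{ij} = 1 if i ≤ j and 2 if i > j, and let S_n be the 2n×2n block matrix [[0, A_n],[B_n, 0]]. Then det(t·S_n − S_nᵀ) = (2tⁿ − 1)·(2 − tⁿ) = −(2t^{2n} − 5tⁿ + 2) in ℤ[t]. -/

import Mathlib

/-!
Put `M = t·A − Bᵀ` and `N = t·B − Aᵀ`. Then `t·S − Sᵀ = [[0, M], [N, 0]]`, whose determinant is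
`(-1)ⁿ · det M · det N`. Each of `M`, `N` takes one constant value `a` above the diagonal, `d` on
it and `b` below it. Adding `x` to every entry is a rank-one change, so the determinant is affine
in `x`; at `x = -a` and `x = -b` the matrix is triangular, and interpolating gives
`(b - a) · det = b (d - a)ⁿ - a (d - b)ⁿ`. For `M` and `N` both `b - a = ±(t - 1)` divides the
right-hand side, leaving `det M = 2tⁿ - 1` and `det N = (-1)ⁿ (2 - tⁿ)`.
-/

open Polynomial

theorem Polynomial.X_sub_one_ne_zero {R : Type*} [Ring R] [Nontrivial R] :
    (X - 1 : R[X]) ≠ 0 := by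
  simpa using X_sub_C_ne_zero (1 : R)

theorem Equiv.Perm.sign_sumComm_self (ι : Type*) [Fintype ι] [DecidableEq ι] :
    sign (Equiv.sumComm ι ι) = (-1) ^ Fintype.card ι := by
  rw [sign_eq_sign_of_equiv _ (prodCongrLeft fun _ : ι => swap false true)
      (boolProdEquivSum ι).symm (by rintro (i | i) <;> rfl),
    sign_prodCongrLeft]
  simp

namespace Matrix

section Det

variable {ι R : Type*} [Fintype ι] [DecidableEq ι] [CommRing R]

theorem det_fromBlocks_zero₁₁_zero₂₂ (B C : Matrix ι ι R) :
    (fromBlocks 0 B C 0).det = (-1) ^ Fintype.card ι * B.det * C.det := by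
  have hswap : fromBlocks 0 B C 0 = (fromBlocks B 0 0 C).submatrix id (Equiv.sumComm ι ι) := by
    ext (i | i) (j | j) <;> rfl
  rw [hswap, det_permute', Equiv.Perm.sign_sumComm_self, det_fromBlocks_zero₂₁]
  push_cast
  ring

theorem exists_det_add_smul_replicateRow (M : Matrix ι ι R) (v : ι → R) :
    ∃ c, ∀ x : R, (M + x • replicateRow ι v).det = M.det + x * c := by
  cases isEmpty_or_nonempty ι with
  | inl _ => exact ⟨0, fun x => by simp [det_isEmpty]⟩
  | inr _ =>
    let k : ι := Classical.arbitrary ι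
    -- subtracting row `k` from every other row leaves `x` in row `k` only
    let D : Matrix ι ι R := of fun i j => if i = k then M k j else M i j - M k j
    have hD : ∀ x : R, (M + x • replicateRow ι v).det = D.det + x * (D.updateRow k v).det := by
      intro x
      have hDk : D.det = (D.updateRow k (D k)).det := by rw [updateRow_eq_self]
      rw [← det_updateRow_smul, hDk, ← det_updateRow_add]
      refine det_eq_of_forall_row_eq_smul_add_const (fun i => if i = k then 0 else 1) k
        (if_pos rfl) fun i j => ?_
      by_cases hi : i = k
      · subst hi
        simp [D, updateRow_apply]
      · simp [D, updateRow_apply, hi]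
        ring
    refine ⟨(D.updateRow k v).det, fun x => ?_⟩
    rw [hD, show M.det = D.det by simpa using hD 0]

end Det

section UpperDiagLower

variable {ι R : Type*} [LinearOrder ι] [CommRing R]

def upperDiagLower (a d b : R) : Matrix ι ι R :=
  of fun i j => if i < j then a else if i = j then d else b

theorem upperDiagLower_add_smul_replicateRow_one (a d b x : R) :
    upperDiagLower a d b + x • replicateRow ι 1 = upperDiagLower (a + x) (d + x) (b + x) := by
  ext i j
  simp only [upperDiagLower, add_apply, smul_apply, replicateRow_apply, of_apply]
  split_ifs <;> simp

theorem smul_sub_transpose_eq_upperDiagLower (t p q r s : R) {A B : Matrix ι ι R}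
    (hA : ∀ i j, A i j = if i ≤ j then p else q) (hB : ∀ i j, B i j = if i ≤ j then r else s) :
    t • A - Bᵀ = upperDiagLower (t * p - s) (t * p - r) (t * q - r) := by
  ext i j
  simp only [sub_apply, smul_apply, transpose_apply, hA, hB, upperDiagLower, of_apply, smul_eq_mul]
  rcases lt_trichotomy i j with h | rfl | h
  · simp [h, h.le, h.not_ge]
  · simp
  · simp [h.le, h.not_ge, h.not_gt, h.ne']

variable [Fintype ι]

theorem det_upperDiagLower_zero_left (d b : R) :
    (upperDiagLower 0 d b : Matrix ι ι R).det = d ^ Fintype.card ι := by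
  rw [det_of_isLowerTriangular _ fun i j (hij : i < j) => by simp [upperDiagLower, hij]]
  simp [upperDiagLower]

theorem det_upperDiagLower_zero_right (a d : R) :
    (upperDiagLower a d 0 : Matrix ι ι R).det = d ^ Fintype.card ι := by
  rw [det_of_isUpperTriangular fun i j (hij : j < i) => by
    simp [upperDiagLower, hij.not_gt, hij.ne']]
  simp [upperDiagLower]

theorem sub_mul_det_upperDiagLower (a d b : R) :
    (b - a) * (upperDiagLower a d b : Matrix ι ι R).det =
      b * (d - a) ^ Fintype.card ι - a * (d - b) ^ Fintype.card ι := by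
  obtain ⟨c, hc⟩ := exists_det_add_smul_replicateRow (upperDiagLower a d b : Matrix ι ι R) 1
  have ha := hc (-a)
  have hb := hc (-b)
  simp only [upperDiagLower_add_smul_replicateRow_one, add_neg_cancel, ← sub_eq_add_neg,
    det_upperDiagLower_zero_left, det_upperDiagLower_zero_right] at ha hb
  linear_combination a * hb - b * ha

end UpperDiagLower

theorem det_upperDiagLower_two_mul_X_sub_two (n : ℕ) :
    (upperDiagLower (2 * X - 2) (2 * X - 1) (X - 1) : Matrix (Fin n) (Fin n) ℤ[X]).det =
      2 * X ^ n - 1 := by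
  have h := sub_mul_det_upperDiagLower (ι := Fin n) (2 * X - 2 : ℤ[X]) (2 * X - 1) (X - 1)
  rw [Fintype.card_fin] at h
  refine mul_left_cancel₀ X_sub_one_ne_zero ?_
  linear_combination -h

theorem det_upperDiagLower_X_sub_one (n : ℕ) :
    (upperDiagLower (X - 1) (X - 2) (2 * X - 2) : Matrix (Fin n) (Fin n) ℤ[X]).det =
      (-1) ^ n * (2 - X ^ n) := by
  have h := sub_mul_det_upperDiagLower (ι := Fin n) (X - 1 : ℤ[X]) (X - 2) (2 * X - 2)
  rw [Fintype.card_fin] at h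
  refine mul_left_cancel₀ X_sub_one_ne_zero ?_
  linear_combination h

end Matrix

theorem det_Seifert_general (n : ℕ)
    (A B : Matrix (Fin n) (Fin n) (Polynomial ℤ))
    (hA : ∀ i j, A i j = if i ≤ j then 2 else 1)
    (hB : ∀ i j, B i j = if i ≤ j then 1 else 2)
    (S : Matrix (Fin n ⊕ Fin n) (Fin n ⊕ Fin n) (Polynomial ℤ))
    (hS : S = Matrix.fromBlocks 0 A B 0) :
    ((X : Polynomial ℤ) • S - S.transpose).det = (2 * X ^ n - 1) * (2 - X ^ n) ∧
    (2 * (X : Polynomial ℤ) ^ n - 1) * (2 - X ^ n) = -(2 * X ^ (2 * n) - 5 * X ^ n + 2) := by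
  refine ⟨?_, by ring⟩
  have hblocks : (X : ℤ[X]) • S - S.transpose =
      Matrix.fromBlocks 0 ((X : ℤ[X]) • A - B.transpose) ((X : ℤ[X]) • B - A.transpose) 0 := by
    rw [hS, Matrix.fromBlocks_transpose, Matrix.fromBlocks_smul]
    ext (i | i) (j | j) <;> simp
  rw [hblocks, Matrix.det_fromBlocks_zero₁₁_zero₂₂,
    Matrix.smul_sub_transpose_eq_upperDiagLower X 2 1 1 2 hA hB,
    Matrix.smul_sub_transpose_eq_upperDiagLower X 1 2 2 1 hB hA, Fintype.card_fin]
  simp only [mul_one, mul_comm X (2 : ℤ[X]), Matrix.det_upperDiagLower_two_mul_X_sub_two,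
    Matrix.det_upperDiagLower_X_sub_one]
  have hsign : ((-1 : ℤ[X]) ^ n) * (-1) ^ n = 1 := by rw [← mul_pow]; simp
  linear_combination (2 * X ^ n - 1) * (2 - X ^ n) * hsign

/-- `det (t·Sₙ − Sₙᵀ) = (2tⁿ − 1)(2 − tⁿ) = −(2t^{2n} − 5tⁿ + 2)` for the
Seifert matrix `Sₙ = [[0, Aₙ],[Bₙ, 0]]` of `K_{n,m}`. -/
theorem det_Seifert (n : ℕ) (hn : 1 ≤ n)
    (A B : Matrix (Fin n) (Fin n) (Polynomial ℤ))
    (hA : ∀ i j, A i j = if i ≤ j then 2 else 1)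
    (hB : ∀ i j, B i j = if i ≤ j then 1 else 2)
    (S : Matrix (Fin n ⊕ Fin n) (Fin n ⊕ Fin n) (Polynomial ℤ))
    (hS : S = Matrix.fromBlocks 0 A B 0) :
    ((X : Polynomial ℤ) • S - S.transpose).det = (2 * X ^ n - 1) * (2 - X ^ n) ∧
    (2 * (X : Polynomial ℤ) ^ n - 1) * (2 - X ^ n) = -(2 * X ^ (2 * n) - 5 * X ^ n + 2) :=
  det_Seifert_general n A B hA hB S hS
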